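/- arXiv:1806.11340 — 7 statements merged into one kernel-verified Lean document; each statement's English description precedes it below -/
import Mathlib

section
/- Let A₀ = x₁x₂² − 2x₁²x₃ + x₀x₂x₃, A₁ = x₀(3x₁x₃ − 2x₂²), A₂ = x₀(x₁x₂ − 3x₀x₃), A₃ = x₀(2x₀x₂ − x₁²) in ℚ[x₀,x₁,x₂,x₃]. Then the radical of the ideal ⟨A₀,A₁,A₂,A₃⟩ equals the intersection of the three ideals ⟨x₀, x₂² − 2x₁x₃⟩, ⟨x₀, x₁⟩, and ⟨2x₂² − 3x₁x₃, x₁x₂ − 3x₀x₃, x₁² − 2x₀x₂⟩. (The singular locus of the standard exceptional foliation consists of a conic in the plane x₀ = 0, the line x₀ = x₁ = 0, and a twisted cubic.) -/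
/-!
Each of the three ideals on the right is prime, being the kernel of a monomial parametrization:
`(s, t) ↦ (0, s², 2st, 2t²)` for the cone over the conic, `(0, 0, s, t)` for the line and
`(6s³, 6s²t, 3st², t³)` for the twisted cubic. That the ideal is the whole kernel is seen by
reducing every monomial modulo the ideal to a combination of standard monomials, on whose
exponents the parametrization is injective.

The generators `Aᵢ` lie in all three ideals. Conversely, `A₀ = x₁(x₂² − 2x₁x₃) + x₀x₂x₃` and the
other `Aᵢ` are `± x₀` times the generators of the twisted cubic, so the product of the three
ideals lies in `⟨A₀, …, A₃⟩`. Hence the radical is the intersection.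
-/

open MvPolynomial

theorem Ideal.mem_span_triple_of_eq {R : Type*} [CommSemiring R] {x y z p : R} (a b c : R)
    (h : a * x + b * y + c * z = p) : p ∈ Ideal.span {x, y, z} := by
  rw [← h]
  exact add_mem (add_mem (mul_mem_left _ _ (subset_span (by simp)))
    (mul_mem_left _ _ (subset_span (by simp)))) (mul_mem_left _ _ (subset_span (by simp)))

theorem Ideal.mem_span_quadruple_of_eq {R : Type*} [CommSemiring R] {x y z t p : R}
    (a b c d : R) (h : a * x + b * y + c * z + d * t = p) : p ∈ Ideal.span {x, y, z, t} := by
  rw [← h]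
  exact add_mem (add_mem (add_mem (mul_mem_left _ _ (subset_span (by simp)))
    (mul_mem_left _ _ (subset_span (by simp)))) (mul_mem_left _ _ (subset_span (by simp))))
    (mul_mem_left _ _ (subset_span (by simp)))

theorem Ideal.radical_eq_inf_of_le_of_mul_le {R : Type*} [CommSemiring R] {I P Q T : Ideal R}
    (hP : P.IsRadical) (hQ : Q.IsRadical) (hT : T.IsRadical)
    (hIP : I ≤ P) (hIQ : I ≤ Q) (hIT : I ≤ T) (hPQT : P * Q * T ≤ I) :
    I.radical = P ⊓ Q ⊓ T := by
  have hrad : (P * Q * T).radical = P ⊓ Q ⊓ T := by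
    rw [radical_mul, radical_mul, hP.radical, hQ.radical, hT.radical]
  exact le_antisymm ((hP.inf hQ).inf hT |>.radical_le_iff.2 (le_inf (le_inf hIP hIQ) hIT))
    (hrad ▸ radical_mono hPQT)

namespace MvPolynomial

section MonomialParametrization

variable {σ τ K : Type*} [CommRing K]

theorem aeval_monomial_monomial (w : σ → τ →₀ ℕ) (κ : σ → K) (m : σ →₀ ℕ) (a : K) :
    aeval (fun i => monomial (w i) (κ i)) (monomial m a) =
      monomial (Finsupp.linearCombination ℕ w m) (a * m.prod fun i e => κ i ^ e) := by
  simp only [aeval_monomial, monomial_pow, algebraMap_eq, Finsupp.prod,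
    Finsupp.linearCombination_apply, Finsupp.sum]
  rw [← monomial_sum_prod, C_mul_monomial]

variable [IsDomain K] {N : Set (σ →₀ ℕ)} {w : σ → τ →₀ ℕ} {κ : σ → K}

theorem eq_zero_of_aeval_monomial_eq_zero (hinj : Set.InjOn (Finsupp.linearCombination ℕ w) N)
    (hκ : ∀ m ∈ N, ∀ i, m i ≠ 0 → κ i ≠ 0) {r : MvPolynomial σ K}
    (hr : r ∈ restrictSupport K N) (h : aeval (fun i => monomial (w i) (κ i)) r = 0) :
    r = 0 := by
  classical
  ext u
  by_contra hu
  have huN : u ∈ N := hr (mem_support_iff.2 hu)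
  have hcoeff : coeff (Finsupp.linearCombination ℕ w u)
      (aeval (fun i => monomial (w i) (κ i)) r) = coeff u r * u.prod fun i e => κ i ^ e := by
    conv_lhs => rw [r.as_sum, map_sum, coeff_sum]
    rw [Finset.sum_eq_single u]
    · rw [aeval_monomial_monomial, coeff_monomial, if_pos rfl]
    · intro v hv hvu
      rw [aeval_monomial_monomial, coeff_monomial, if_neg fun hE => hvu (hinj (hr hv) huN hE)]
    · exact fun hu' => absurd (notMem_support_iff.1 hu') hu
  rw [h, coeff_zero] at hcoeff
  refine mul_ne_zero hu (Finsupp.prod_ne_zero_iff.2 fun i hi => ?_) hcoeff.symm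
  exact pow_ne_zero _ (hκ u huN i (Finsupp.mem_support_iff.1 hi))

theorem isPrime_of_le_ker_aeval_monomial {S : Ideal (MvPolynomial σ K)}
    (hS : S ≤ RingHom.ker (aeval (fun i => monomial (w i) (κ i))))
    (hspan : ∀ m, monomial m 1 ∈ S.restrictScalars K ⊔ restrictSupport K N)
    (hinj : Set.InjOn (Finsupp.linearCombination ℕ w) N)
    (hκ : ∀ m ∈ N, ∀ i, m i ≠ 0 → κ i ≠ 0) : S.IsPrime := by
  suffices S = RingHom.ker (aeval (fun i => monomial (w i) (κ i))) from
    this ▸ RingHom.ker_isPrime _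
  refine le_antisymm hS fun p hp => ?_
  have hT : ⊤ ≤ S.restrictScalars K ⊔ restrictSupport K N :=
    (basisMonomials σ K).span_eq ▸ Submodule.span_le.2 (Set.range_subset_iff.2 fun m => by
      simpa using hspan m)
  obtain ⟨s, hs, r, hr, rfl⟩ := Submodule.mem_sup.1 (hT (Submodule.mem_top (x := p)))
  have hr0 : r = 0 := by
    refine eq_zero_of_aeval_monomial_eq_zero hinj hκ hr ?_
    rwa [RingHom.mem_ker, map_add, hS hs, zero_add] at hp
  rwa [hr0, add_zero]

end MonomialParametrization

theorem mem_sup_restrictSupport_of_smul_sub_smul_eq {σ K : Type*} [Field K]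
    {S : Ideal (MvPolynomial σ K)} {N : Set (σ →₀ ℕ)} {p q r g : MvPolynomial σ K} {k k' : K}
    (hk : k ≠ 0) (hq : q ∈ S.restrictScalars K ⊔ restrictSupport K N)
    (h : k • p - k' • q = r * g) (hg : g ∈ S) :
    p ∈ S.restrictScalars K ⊔ restrictSupport K N := by
  have hp : p = k⁻¹ • (k • p - k' • q) + (k⁻¹ * k') • q := by
    rw [smul_sub, smul_smul, smul_smul, inv_mul_cancel₀ hk, one_smul, sub_add_cancel]
  rw [hp, h]
  exact add_mem (Submodule.mem_sup_left (S.smul_of_tower_mem _ (S.mul_mem_left r hg)))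
    (Submodule.smul_mem _ _ hq)

theorem X_pow_mul_fin_four {R : Type*} [CommSemiring R] (a b c d : ℕ) :
    (X 0 ^ a * X 1 ^ b * X 2 ^ c * X 3 ^ d : MvPolynomial (Fin 4) R) =
      monomial (.single 0 a + .single 1 b + .single 2 c + .single 3 d) 1 := by
  simp only [X_pow_eq_monomial, monomial_mul, mul_one]

theorem monomial_fin_four {R : Type*} [CommSemiring R] (d : Fin 4 →₀ ℕ) (a : R) :
    monomial d a = C a * X 0 ^ d 0 * X 1 ^ d 1 * X 2 ^ d 2 * X 3 ^ d 3 := by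
  rw [monomial_eq, d.prod_fintype _ fun _ ↦ pow_zero _, Fin.prod_univ_four]
  ring

end MvPolynomial

namespace ExceptionalFoliation

noncomputable def singularIdeal : Ideal (MvPolynomial (Fin 4) ℚ) :=
  Ideal.span {X 1 * X 2 ^ 2 - 2 * X 1 ^ 2 * X 3 + X 0 * X 2 * X 3,
    X 0 * (3 * X 1 * X 3 - 2 * X 2 ^ 2), X 0 * (X 1 * X 2 - 3 * X 0 * X 3),
    X 0 * (2 * X 0 * X 2 - X 1 ^ 2)}

noncomputable def conicIdeal : Ideal (MvPolynomial (Fin 4) ℚ) :=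
  Ideal.span {X 0, X 2 ^ 2 - 2 * X 1 * X 3}

noncomputable def lineIdeal : Ideal (MvPolynomial (Fin 4) ℚ) :=
  Ideal.span {X 0, X 1}

noncomputable def twistedCubicIdeal : Ideal (MvPolynomial (Fin 4) ℚ) :=
  Ideal.span {2 * X 2 ^ 2 - 3 * X 1 * X 3, X 1 * X 2 - 3 * X 0 * X 3, X 1 ^ 2 - 2 * X 0 * X 2}

theorem X_pow_mem_lineIdeal_sup : ∀ a b c d : ℕ,
    (X 0 ^ a * X 1 ^ b * X 2 ^ c * X 3 ^ d : MvPolynomial (Fin 4) ℚ) ∈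
      lineIdeal.restrictScalars ℚ ⊔ restrictSupport ℚ {m | m 0 = 0 ∧ m 1 = 0}
  | a + 1, b, c, d => Submodule.mem_sup_left <|
      Ideal.mem_of_dvd _ (a := X 0) ⟨X 0 ^ a * X 1 ^ b * X 2 ^ c * X 3 ^ d, by ring⟩
        (Ideal.subset_span (by simp))
  | 0, b + 1, c, d => Submodule.mem_sup_left <|
      Ideal.mem_of_dvd _ (a := X 1) ⟨X 1 ^ b * X 2 ^ c * X 3 ^ d, by ring⟩
        (Ideal.subset_span (by simp))
  | 0, 0, c, d => Submodule.mem_sup_right (by rw [X_pow_mul_fin_four]; simp)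

theorem X_pow_mem_conicIdeal_sup : ∀ a b c d : ℕ,
    (X 0 ^ a * X 1 ^ b * X 2 ^ c * X 3 ^ d : MvPolynomial (Fin 4) ℚ) ∈
      conicIdeal.restrictScalars ℚ ⊔ restrictSupport ℚ {m | m 0 = 0 ∧ m 2 ≤ 1}
  | a + 1, b, c, d => Submodule.mem_sup_left <|
      Ideal.mem_of_dvd _ (a := X 0) ⟨X 0 ^ a * X 1 ^ b * X 2 ^ c * X 3 ^ d, by ring⟩
        (Ideal.subset_span (by simp))
  | 0, b, c + 2, d =>
      mem_sup_restrictSupport_of_smul_sub_smul_eq (k := 1) (k' := 2) one_ne_zero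
        (X_pow_mem_conicIdeal_sup 0 (b + 1) c (d + 1))
        (r := X 1 ^ b * X 2 ^ c * X 3 ^ d) (g := X 2 ^ 2 - 2 * X 1 * X 3)
        (by simp only [smul_eq_C_mul, map_one, map_ofNat]; ring) (Ideal.subset_span (by simp))
  | 0, b, 0, d | 0, b, 1, d => Submodule.mem_sup_right (by rw [X_pow_mul_fin_four]; simp)

theorem X_pow_mem_twistedCubicIdeal_sup : ∀ a b c d : ℕ,
    (X 0 ^ a * X 1 ^ b * X 2 ^ c * X 3 ^ d : MvPolynomial (Fin 4) ℚ) ∈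
      twistedCubicIdeal.restrictScalars ℚ ⊔ restrictSupport ℚ {m | m 1 + m 2 ≤ 1}
  | a, b + 2, c, d =>
      mem_sup_restrictSupport_of_smul_sub_smul_eq (k := 1) (k' := 2) one_ne_zero
        (X_pow_mem_twistedCubicIdeal_sup (a + 1) b (c + 1) d)
        (r := X 0 ^ a * X 1 ^ b * X 2 ^ c * X 3 ^ d) (g := X 1 ^ 2 - 2 * X 0 * X 2)
        (by simp only [smul_eq_C_mul, map_one, map_ofNat]; ring) (Ideal.subset_span (by simp))
  | a, 1, c + 1, d =>
      mem_sup_restrictSupport_of_smul_sub_smul_eq (k := 1) (k' := 3) one_ne_zero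
        (X_pow_mem_twistedCubicIdeal_sup (a + 1) 0 c (d + 1))
        (r := X 0 ^ a * X 2 ^ c * X 3 ^ d) (g := X 1 * X 2 - 3 * X 0 * X 3)
        (by simp only [smul_eq_C_mul, map_one, map_ofNat]; ring) (Ideal.subset_span (by simp))
  | a, 0, c + 2, d =>
      mem_sup_restrictSupport_of_smul_sub_smul_eq (k := 2) (k' := 3) two_ne_zero
        (X_pow_mem_twistedCubicIdeal_sup a 1 c (d + 1))
        (r := X 0 ^ a * X 2 ^ c * X 3 ^ d) (g := 2 * X 2 ^ 2 - 3 * X 1 * X 3)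
        (by simp only [smul_eq_C_mul, map_ofNat]; ring) (Ideal.subset_span (by simp))
  | a, 0, 0, d | a, 1, 0, d | a, 0, 1, d =>
      Submodule.mem_sup_right (by rw [X_pow_mul_fin_four]; simp)
termination_by _ b c _ => b + c

theorem conicIdeal_isPrime : conicIdeal.IsPrime := by
  refine isPrime_of_le_ker_aeval_monomial (τ := Fin 2) (N := {m | m 0 = 0 ∧ m 2 ≤ 1})
    (w := fun i => .single 0 (![0, 2, 1, 0] i) + .single 1 (![0, 0, 1, 2] i))
    (κ := ![0, 1, 2, 2]) ?_ (fun m => ?_) ?_ ?_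
  · refine Ideal.span_le.2 ?_
    rintro _ (rfl | rfl) <;>
      simp only [SetLike.mem_coe, RingHom.mem_ker, map_sub, map_mul, map_pow, map_ofNat,
        aeval_X] <;>
      simp only [monomial_fin_two] <;> simp [map_ofNat C]
    ring
  · rw [monomial_fin_four, map_one, one_mul]
    exact X_pow_mem_conicIdeal_sup _ _ _ _
  · rintro m ⟨h0, h2⟩ m' ⟨h0', h2'⟩ hE
    have e0 := DFunLike.congr_fun hE 0
    have e1 := DFunLike.congr_fun hE 1
    simp [Finsupp.linearCombination_apply, Finsupp.sum_fintype, Fin.sum_univ_four] at e0 e1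
    ext i
    fin_cases i <;> simp <;> omega
  · rintro m ⟨h0, -⟩ i hi
    fin_cases i <;> simp_all

theorem lineIdeal_isPrime : lineIdeal.IsPrime := by
  refine isPrime_of_le_ker_aeval_monomial (τ := Fin 2) (N := {m | m 0 = 0 ∧ m 1 = 0})
    (w := fun i => .single 0 (![0, 0, 1, 0] i) + .single 1 (![0, 0, 0, 1] i))
    (κ := ![0, 0, 1, 1]) ?_ (fun m => ?_) ?_ ?_
  · refine Ideal.span_le.2 ?_
    rintro _ (rfl | rfl) <;> simp [monomial_fin_two]
  · rw [monomial_fin_four, map_one, one_mul]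
    exact X_pow_mem_lineIdeal_sup _ _ _ _
  · rintro m ⟨h0, h1⟩ m' ⟨h0', h1'⟩ hE
    have e0 := DFunLike.congr_fun hE 0
    have e1 := DFunLike.congr_fun hE 1
    simp [Finsupp.linearCombination_apply, Finsupp.sum_fintype, Fin.sum_univ_four] at e0 e1
    ext i
    fin_cases i <;> simp <;> omega
  · rintro m ⟨h0, h1⟩ i hi
    fin_cases i <;> simp_all

theorem twistedCubicIdeal_isPrime : twistedCubicIdeal.IsPrime := by
  refine isPrime_of_le_ker_aeval_monomial (τ := Fin 2) (N := {m | m 1 + m 2 ≤ 1})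
    (w := fun i => .single 0 (![3, 2, 1, 0] i) + .single 1 (![0, 1, 2, 3] i))
    (κ := ![6, 6, 3, 1]) ?_ (fun m => ?_) ?_ ?_
  · refine Ideal.span_le.2 ?_
    rintro _ (rfl | rfl | rfl) <;>
      simp only [SetLike.mem_coe, RingHom.mem_ker, map_sub, map_mul, map_pow, map_ofNat,
        aeval_X] <;>
      simp only [monomial_fin_two] <;> simp [map_ofNat C] <;> ring
  · rw [monomial_fin_four, map_one, one_mul]
    exact X_pow_mem_twistedCubicIdeal_sup _ _ _ _
  · rintro m hm m' hm' hE
    have e0 := DFunLike.congr_fun hE 0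
    have e1 := DFunLike.congr_fun hE 1
    simp [Finsupp.linearCombination_apply, Finsupp.sum_fintype, Fin.sum_univ_four] at e0 e1 hm hm'
    ext i
    fin_cases i <;> simp <;> omega
  · intro m _ i _
    fin_cases i <;> simp

theorem singularIdeal_le_conicIdeal : singularIdeal ≤ conicIdeal := by
  refine Ideal.span_le.2 ?_
  rintro _ (rfl | rfl | rfl | rfl)
  · exact Ideal.mem_span_pair.2 ⟨X 2 * X 3, X 1, by ring⟩
  all_goals exact Ideal.mul_mem_right _ _ (Ideal.subset_span (by simp))

theorem singularIdeal_le_lineIdeal : singularIdeal ≤ lineIdeal := by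
  refine Ideal.span_le.2 ?_
  rintro _ (rfl | rfl | rfl | rfl)
  · exact Ideal.mem_span_pair.2 ⟨X 2 * X 3, X 2 ^ 2 - 2 * X 1 * X 3, by ring⟩
  all_goals exact Ideal.mul_mem_right _ _ (Ideal.subset_span (by simp))

theorem singularIdeal_le_twistedCubicIdeal : singularIdeal ≤ twistedCubicIdeal := by
  refine Ideal.span_le.2 ?_
  rintro _ (rfl | rfl | rfl | rfl)
  · exact Ideal.mem_span_triple_of_eq 0 (X 2) (-2 * X 3) (by ring)
  · exact Ideal.mem_span_triple_of_eq (-X 0) 0 0 (by ring)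
  · exact Ideal.mem_span_triple_of_eq 0 (X 0) 0 (by ring)
  · exact Ideal.mem_span_triple_of_eq 0 0 (-X 0) (by ring)

theorem conicIdeal_mul_lineIdeal_mul_twistedCubicIdeal_le :
    conicIdeal * lineIdeal * twistedCubicIdeal ≤ singularIdeal := by
  rw [conicIdeal, lineIdeal, twistedCubicIdeal, Ideal.span_mul_span', Ideal.span_mul_span',
    Ideal.span_le, Set.mul_subset_iff]
  rintro _ ⟨x, hx, y, hy, rfl⟩ z hz
  simp only [Set.mem_insert_iff, Set.mem_singleton_iff] at hx hy hz
  rcases hx with rfl | rfl <;> rcases hy with rfl | rfl <;> rcases hz with rfl | rfl | rfl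
  · exact Ideal.mem_span_quadruple_of_eq 0 (-X 0) 0 0 (by ring)
  · exact Ideal.mem_span_quadruple_of_eq 0 0 (X 0) 0 (by ring)
  · exact Ideal.mem_span_quadruple_of_eq 0 0 0 (-X 0) (by ring)
  · exact Ideal.mem_span_quadruple_of_eq 0 (-X 1) 0 0 (by ring)
  · exact Ideal.mem_span_quadruple_of_eq 0 0 (X 1) 0 (by ring)
  · exact Ideal.mem_span_quadruple_of_eq 0 0 0 (-X 1) (by ring)
  · exact Ideal.mem_span_quadruple_of_eq 0 (-(X 2 ^ 2 - 2 * X 1 * X 3)) 0 0 (by ring)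
  · exact Ideal.mem_span_quadruple_of_eq 0 0 (X 2 ^ 2 - 2 * X 1 * X 3) 0 (by ring)
  · exact Ideal.mem_span_quadruple_of_eq 0 0 0 (-(X 2 ^ 2 - 2 * X 1 * X 3)) (by ring)
  · exact Ideal.mem_span_quadruple_of_eq (2 * X 2 ^ 2 - 3 * X 1 * X 3) (X 2 * X 3) 0 0 (by ring)
  · exact Ideal.mem_span_quadruple_of_eq (X 1 * X 2 - 3 * X 0 * X 3) 0 (-(X 2 * X 3)) 0
      (by ring)
  · exact Ideal.mem_span_quadruple_of_eq (X 1 ^ 2 - 2 * X 0 * X 2) 0 0 (X 2 * X 3) (by ring)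

end ExceptionalFoliation

/-- The singular locus of the standard exceptional foliation: the radical of
the ideal of the components `A₀,…,A₃` of `ω₀` is the intersection of the ideals
of a conic in the plane `x₀ = 0`, the line `x₀ = x₁ = 0`, and a twisted cubic. -/
theorem stmt3 :
    (Ideal.span
        ({X 1 * X 2 ^ 2 - 2 * X 1 ^ 2 * X 3 + X 0 * X 2 * X 3,
          X 0 * (3 * X 1 * X 3 - 2 * X 2 ^ 2),
          X 0 * (X 1 * X 2 - 3 * X 0 * X 3),
          X 0 * (2 * X 0 * X 2 - X 1 ^ 2)} :
          Set (MvPolynomial (Fin 4) ℚ))).radical =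
      Ideal.span ({X 0, X 2 ^ 2 - 2 * X 1 * X 3} : Set (MvPolynomial (Fin 4) ℚ)) ⊓
      Ideal.span ({X 0, X 1} : Set (MvPolynomial (Fin 4) ℚ)) ⊓
      Ideal.span ({2 * X 2 ^ 2 - 3 * X 1 * X 3,
        X 1 * X 2 - 3 * X 0 * X 3,
        X 1 ^ 2 - 2 * X 0 * X 2} : Set (MvPolynomial (Fin 4) ℚ)) := by
  open ExceptionalFoliation in
  exact Ideal.radical_eq_inf_of_le_of_mul_le conicIdeal_isPrime.isRadical
    lineIdeal_isPrime.isRadical twistedCubicIdeal_isPrime.isRadical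
    singularIdeal_le_conicIdeal singularIdeal_le_lineIdeal singularIdeal_le_twistedCubicIdeal
    conicIdeal_mul_lineIdeal_mul_twistedCubicIdeal_le
end

section
/- In ℚ[x₀,x₁,x₂,x₃], the radical of the sum of the three ideals ⟨x₀, x₂² − 2x₁x₃⟩, ⟨x₀, x₁⟩, and ⟨2x₂² − 3x₁x₃, x₁x₂ − 3x₀x₃, x₁² − 2x₀x₂⟩ equals ⟨x₀, x₁, x₂⟩; that is, the three components of the singular locus of the standard exceptional foliation meet precisely at the single point p₀ = (0:0:0:1). -/
open MvPolynomial

private noncomputable def psi4 : MvPolynomial (Fin 4) ℚ →ₐ[ℚ] MvPolynomial (Fin 4) ℚ :=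
  aeval (fun i => if i = 3 then X 3 else 0)

private noncomputable def I4 : Ideal (MvPolynomial (Fin 4) ℚ) :=
  Ideal.span ({X 0, X 1, X 2} : Set (MvPolynomial (Fin 4) ℚ))

private lemma X0_mem : (X 0 : MvPolynomial (Fin 4) ℚ) ∈ I4 :=
  Ideal.subset_span (by simp)

private lemma X1_mem : (X 1 : MvPolynomial (Fin 4) ℚ) ∈ I4 :=
  Ideal.subset_span (by simp)

private lemma X2_mem : (X 2 : MvPolynomial (Fin 4) ℚ) ∈ I4 :=
  Ideal.subset_span (by simp)

private lemma sub_psi4_mem (p : MvPolynomial (Fin 4) ℚ) : p - psi4 p ∈ I4 := by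
  induction p using MvPolynomial.induction_on with
  | C a => simp [psi4]
  | add p q hp hq =>
    have : p + q - psi4 (p + q) = (p - psi4 p) + (q - psi4 q) := by
      simp [map_add]; ring
    rw [this]; exact Ideal.add_mem _ hp hq
  | mul_X p i hp =>
    fin_cases i
    · show p * X 0 - psi4 (p * X 0) ∈ I4
      have h0 : psi4 (p * X 0) = 0 := by simp [psi4]
      rw [h0, sub_zero]; exact Ideal.mul_mem_left _ p X0_mem
    · show p * X 1 - psi4 (p * X 1) ∈ I4
      have h0 : psi4 (p * X 1) = 0 := by simp [psi4]
      rw [h0, sub_zero]; exact Ideal.mul_mem_left _ p X1_mem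
    · show p * X 2 - psi4 (p * X 2) ∈ I4
      have h0 : psi4 (p * X 2) = 0 := by simp [psi4]
      rw [h0, sub_zero]; exact Ideal.mul_mem_left _ p X2_mem
    · show p * X 3 - psi4 (p * X 3) ∈ I4
      have h0 : p * X 3 - psi4 (p * X 3) = (p - psi4 p) * X 3 := by
        simp [psi4, map_mul]; ring
      rw [h0]; exact Ideal.mul_mem_right _ _ hp

private lemma ker_psi4 : RingHom.ker psi4.toRingHom = I4 := by
  apply le_antisymm
  · intro p hp
    have h : psi4 p = 0 := hp
    have := sub_psi4_mem p
    rwa [h, sub_zero] at this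
  · rw [I4, Ideal.span_le]
    rintro q hq
    simp only [Set.mem_insert_iff, Set.mem_singleton_iff] at hq
    rcases hq with rfl | rfl | rfl <;>
      simp [RingHom.mem_ker, psi4]

private lemma I4_prime : I4.IsPrime := ker_psi4 ▸ RingHom.ker_isPrime _

/-- The three components of the singular locus of the standard exceptional
foliation meet precisely at the point `p₀ = (0:0:0:1)`: the radical of the sum
of their ideals is `⟨x₀, x₁, x₂⟩`. -/
theorem stmt4 :
    (Ideal.span ({X 0, X 2 ^ 2 - 2 * X 1 * X 3} : Set (MvPolynomial (Fin 4) ℚ)) +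
      Ideal.span ({X 0, X 1} : Set (MvPolynomial (Fin 4) ℚ)) +
      Ideal.span ({2 * X 2 ^ 2 - 3 * X 1 * X 3,
        X 1 * X 2 - 3 * X 0 * X 3,
        X 1 ^ 2 - 2 * X 0 * X 2} : Set (MvPolynomial (Fin 4) ℚ))).radical =
      Ideal.span ({X 0, X 1, X 2} : Set (MvPolynomial (Fin 4) ℚ)) := by
  set J := Ideal.span ({X 0, X 2 ^ 2 - 2 * X 1 * X 3} : Set (MvPolynomial (Fin 4) ℚ)) +
      Ideal.span ({X 0, X 1} : Set (MvPolynomial (Fin 4) ℚ)) +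
      Ideal.span ({2 * X 2 ^ 2 - 3 * X 1 * X 3,
        X 1 * X 2 - 3 * X 0 * X 3,
        X 1 ^ 2 - 2 * X 0 * X 2} : Set (MvPolynomial (Fin 4) ℚ)) with hJ
  show J.radical = I4
  apply le_antisymm
  · have hJI : J ≤ I4 := by
      rw [hJ]
      refine sup_le (sup_le ?_ ?_) ?_ <;> rw [Ideal.span_le] <;> rintro q hq <;>
        simp only [Set.mem_insert_iff, Set.mem_singleton_iff] at hq
      · rcases hq with rfl | rfl
        · exact X0_mem
        · have : (X 2 ^ 2 - 2 * X 1 * X 3 : MvPolynomial (Fin 4) ℚ)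
              = X 2 * X 2 - (2 * X 3) * X 1 := by ring
          rw [this]
          exact Ideal.sub_mem _ (Ideal.mul_mem_left _ _ X2_mem)
            (Ideal.mul_mem_left _ _ X1_mem)
      · rcases hq with rfl | rfl
        · exact X0_mem
        · exact X1_mem
      · rcases hq with rfl | rfl | rfl
        · have : (2 * X 2 ^ 2 - 3 * X 1 * X 3 : MvPolynomial (Fin 4) ℚ)
              = (2 * X 2) * X 2 - (3 * X 3) * X 1 := by ring
          rw [this]
          exact Ideal.sub_mem _ (Ideal.mul_mem_left _ _ X2_mem)
            (Ideal.mul_mem_left _ _ X1_mem)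
        · have : (X 1 * X 2 - 3 * X 0 * X 3 : MvPolynomial (Fin 4) ℚ)
              = X 2 * X 1 - (3 * X 3) * X 0 := by ring
          rw [this]
          exact Ideal.sub_mem _ (Ideal.mul_mem_left _ _ X1_mem)
            (Ideal.mul_mem_left _ _ X0_mem)
        · have : (X 1 ^ 2 - 2 * X 0 * X 2 : MvPolynomial (Fin 4) ℚ)
              = X 1 * X 1 - (2 * X 2) * X 0 := by ring
          rw [this]
          exact Ideal.sub_mem _ (Ideal.mul_mem_left _ _ X1_mem)
            (Ideal.mul_mem_left _ _ X0_mem)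
    calc J.radical ≤ I4.radical := Ideal.radical_mono hJI
      _ = I4 := I4_prime.radical
  · rw [I4, Ideal.span_le]
    rintro q hq
    simp only [Set.mem_insert_iff, Set.mem_singleton_iff] at hq
    have hX0 : (X 0 : MvPolynomial (Fin 4) ℚ) ∈ J :=
      Ideal.mem_sup_left (Ideal.mem_sup_left (Ideal.subset_span (by simp)))
    have hX1 : (X 1 : MvPolynomial (Fin 4) ℚ) ∈ J :=
      Ideal.mem_sup_left (Ideal.mem_sup_right (Ideal.subset_span (by simp)))
    have hq1 : (X 2 ^ 2 - 2 * X 1 * X 3 : MvPolynomial (Fin 4) ℚ) ∈ J :=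
      Ideal.mem_sup_left (Ideal.mem_sup_left (Ideal.subset_span (by simp)))
    rcases hq with rfl | rfl | rfl
    · exact Ideal.le_radical hX0
    · exact Ideal.le_radical hX1
    · refine ⟨2, ?_⟩
      have : (X 2 ^ 2 : MvPolynomial (Fin 4) ℚ)
          = (X 2 ^ 2 - 2 * X 1 * X 3) + (2 * X 3) * X 1 := by ring
      rw [this]
      exact Ideal.add_mem _ hq1 (Ideal.mul_mem_left _ _ hX1)
end

section
/- Let a₀,…,a₆, b₀,…,b₃ ∈ ℂ and set f = (a₀x₀ + a₁x₁ + a₂x₂ + a₃x₃)x₀² + a₄x₀x₁² + a₅x₀x₁x₂ + a₆x₁³ and g = b₀x₀² + b₁x₀x₁ + b₂x₀x₂ + b₃x₁² in ℂ[x₀,x₁,x₂,x₃]. Then x₀ divides 3f·∂g/∂xᵢ − 2g·∂f/∂xᵢ for i = 1, 2, 3 unconditionally, while x₀ divides 3f·∂g/∂x₀ − 2g·∂f/∂x₀ if and only if 3a₆b₁ = 2a₄b₃ and 3a₆b₂ = 2a₅b₃. Equivalently, 3f·∂g/∂x₀ − 2g·∂f/∂x₀ − (3a₆b₁ − 2a₄b₃)x₁⁴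 − (3a₆b₂ − 2a₅b₃)x₁³x₂ is divisible by x₀. -/
open MvPolynomial

set_option maxHeartbeats 1000000

/-- Divisibility condition for a special pair `(g, f)` over the standard flag:
`x₀` always divides the `dx₁, dx₂, dx₃` components of `3f·dg − 2g·df`, and it
divides the `dx₀` component iff `3a₆b₁ = 2a₄b₃` and `3a₆b₂ = 2a₅b₃`;
equivalently, the `dx₀` component minus
`(3a₆b₁ − 2a₄b₃)x₁⁴ + (3a₆b₂ − 2a₅b₃)x₁³x₂` is divisible by `x₀`. -/
theorem stmt9 (a₀ a₁ a₂ a₃ a₄ a₅ a₆ b₀ b₁ b₂ b₃ : ℂ)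
    (f g : MvPolynomial (Fin 4) ℂ)
    (hf : f = (C a₀ * X 0 + C a₁ * X 1 + C a₂ * X 2 + C a₃ * X 3) * X 0 ^ 2 +
      C a₄ * X 0 * X 1 ^ 2 + C a₅ * X 0 * X 1 * X 2 + C a₆ * X 1 ^ 3)
    (hg : g = C b₀ * X 0 ^ 2 + C b₁ * X 0 * X 1 + C b₂ * X 0 * X 2 +
      C b₃ * X 1 ^ 2) :
    (∀ i : Fin 4, i ≠ 0 →
      (X 0 : MvPolynomial (Fin 4) ℂ) ∣ 3 * f * pderiv i g - 2 * g * pderiv i f) ∧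
    (((X 0 : MvPolynomial (Fin 4) ℂ) ∣
        3 * f * pderiv 0 g - 2 * g * pderiv 0 f) ↔
      (3 * a₆ * b₁ = 2 * a₄ * b₃ ∧ 3 * a₆ * b₂ = 2 * a₅ * b₃)) ∧
    ((X 0 : MvPolynomial (Fin 4) ℂ) ∣
      3 * f * pderiv 0 g - 2 * g * pderiv 0 f -
        C (3 * a₆ * b₁ - 2 * a₄ * b₃) * X 1 ^ 4 -
        C (3 * a₆ * b₂ - 2 * a₅ * b₃) * X 1 ^ 3 * X 2) := by
  subst hf hg
  set F : MvPolynomial (Fin 4) ℂ := (C a₀ * X 0 + C a₁ * X 1 + C a₂ * X 2 + C a₃ * X 3) * X 0 ^ 2 +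
      C a₄ * X 0 * X 1 ^ 2 + C a₅ * X 0 * X 1 * X 2 + C a₆ * X 1 ^ 3 with hF
  set G : MvPolynomial (Fin 4) ℂ := C b₀ * X 0 ^ 2 + C b₁ * X 0 * X 1 + C b₂ * X 0 * X 2 +
      C b₃ * X 1 ^ 2 with hG
  have h0f : pderiv (0 : Fin 4) F =
      C (3*a₀) * X 0 ^ 2 + C (2*a₁) * X 0 * X 1 + C (2*a₂) * X 0 * X 2
        + C (2*a₃) * X 0 * X 3 + C a₄ * X 1 ^ 2 + C a₅ * X 1 * X 2 := by
    rw [hF]; simp [pderiv_mul, pderiv_X_self, pderiv_X_of_ne, C_mul, map_ofNat]; ring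
  have h1f : pderiv (1 : Fin 4) F =
      C a₁ * X 0 ^ 2 + C (2*a₄) * X 0 * X 1 + C a₅ * X 0 * X 2 + C (3*a₆) * X 1 ^ 2 := by
    rw [hF]; simp [pderiv_mul, pderiv_X_self, pderiv_X_of_ne, C_mul, map_ofNat]; ring
  have h2f : pderiv (2 : Fin 4) F = C a₂ * X 0 ^ 2 + C a₅ * X 0 * X 1 := by
    rw [hF]; simp [pderiv_mul, pderiv_X_self, pderiv_X_of_ne, C_mul, map_ofNat]; ring
  have h3f : pderiv (3 : Fin 4) F = C a₃ * X 0 ^ 2 := by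
    rw [hF]; simp [pderiv_mul, pderiv_X_self, pderiv_X_of_ne, C_mul, map_ofNat]; ring
  have h0g : pderiv (0 : Fin 4) G = C (2*b₀) * X 0 + C b₁ * X 1 + C b₂ * X 2 := by
    rw [hG]; simp [pderiv_mul, pderiv_X_self, pderiv_X_of_ne, C_mul, map_ofNat]; ring
  have h1g : pderiv (1 : Fin 4) G = C b₁ * X 0 + C (2*b₃) * X 1 := by
    rw [hG]; simp [pderiv_mul, pderiv_X_self, pderiv_X_of_ne, C_mul, map_ofNat]; ring
  have h2g : pderiv (2 : Fin 4) G = C b₂ * X 0 := by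
    rw [hG]; simp [pderiv_mul, pderiv_X_self, pderiv_X_of_ne, C_mul, map_ofNat]
  have h3g : pderiv (3 : Fin 4) G = 0 := by
    rw [hG]; simp [pderiv_mul, pderiv_X_self, pderiv_X_of_ne]
  have key : (X 0 : MvPolynomial (Fin 4) ℂ) ∣
      3 * F * pderiv 0 G - 2 * G * pderiv 0 F -
        C (3 * a₆ * b₁ - 2 * a₄ * b₃) * X 1 ^ 4 -
        C (3 * a₆ * b₂ - 2 * a₅ * b₃) * X 1 ^ 3 * X 2 := by
    refine ⟨C (a₅*b₂) * X 1 * X 2^2 + C (-4*a₃*b₃) * X 1^2 * X 3 + C (a₅*b₁) * X 1^2 * X 2 + C (a₄*b₂) * X 1^2 * X 2 + C (-4*a₂*b₃) * X 1^2 * X 2 + C (6*a₆*b₀) * X 1^3 + C (a₄*b₁) * X 1^3 + C (-4*a₁*b₃) * X 1^3 + C (-1*a₃*b₂) * X 0 * X 2 * X 3 + C (-1*a₂*b₂) * X 0 * X 2^2 + C (-1*a₃*b₁) * X 0 * X 1 * X 3 + C (4*a₅*b₀) * X 0 * X 1 * X 2 + C (-1*a₂*b₁) * X 0 * X 1 *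 X 2 + C (-1*a₁*b₂) * X 0 * X 1 * X 2 + C (4*a₄*b₀) * X 0 * X 1^2 + C (-1*a₁*b₁) * X 0 * X 1^2 + C (-6*a₀*b₃) * X 0 * X 1^2 + C (2*a₃*b₀) * X 0^2 * X 3 + C (2*a₂*b₀) * X 0^2 * X 2 + C (-3*a₀*b₂) * X 0^2 * X 2 + C (2*a₁*b₀) * X 0^2 * X 1 + C (-3*a₀*b₁) * X 0^2 * X 1, ?_⟩
    rw [h0f, h0g, hF, hG]
    simp only [C_mul, map_neg, map_one, map_ofNat, C_1, map_sub]
    ring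
  refine ⟨?_, ⟨?_, ?_⟩, key⟩
  · intro i hi
    fin_cases i
    · exact absurd rfl hi
    · show (X 0 : MvPolynomial (Fin 4) ℂ) ∣ 3 * F * pderiv (1 : Fin 4) G - 2 * G * pderiv (1 : Fin 4) F
      refine ⟨C (-6*a₆*b₂) * X 1^2 * X 2 + C (4*a₅*b₃) * X 1^2 * X 2 + C (-3*a₆*b₁) * X 1^3 + C (2*a₄*b₃) * X 1^3 + C (-2*a₅*b₂) * X 0 * X 2^2 + C (6*a₃*b₃) * X 0 * X 1 * X 3 + C (a₅*b₁) * X 0 * X 1 * X 2 + C (-4*a₄*b₂) * X 0 * X 1 * X 2 + C (6*a₂*b₃) * X 0 * X 1 * X 2 + C (-6*a₆*b₀) * X 0 * X 1^2 + C (-1*a₄*b₁) * X 0 * X 1^2 + C (4*a₁*b₃) * X 0 * X 1^2 + C (3*a₃*b₁) * X 0^2 * X 3 + C (-2*a₅*b₀) * X 0^2 * X 2 + C (3*a₂*b₁) * X 0^2 * X 2 + C (-2*a₁*b₂) * X 0^2 * X 2 + C (-4*a₄*b₀) * X 0^2 * X 1 + C (a₁*b₁) * X 0^2 * X 1 + C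 (6*a₀*b₃) * X 0^2 * X 1 + C (-2*a₁*b₀) * X 0^3 + C (3*a₀*b₁) * X 0^3, ?_⟩
      rw [h1f, h1g, hF, hG]
      simp only [C_mul, map_neg, map_one, map_ofNat, C_1]
      ring
    · show (X 0 : MvPolynomial (Fin 4) ℂ) ∣ 3 * F * pderiv (2 : Fin 4) G - 2 * G * pderiv (2 : Fin 4) F
      refine ⟨C (3*a₆*b₂) * X 1^3 + C (-2*a₅*b₃) * X 1^3 + C (a₅*b₂) * X 0 * X 1 * X 2 + C (-2*a₅*b₁) * X 0 * X 1^2 + C (3*a₄*b₂) * X 0 * X 1^2 + C (-2*a₂*b₃) * X 0 * X 1^2 + C (3*a₃*b₂) * X 0^2 * X 3 + C (a₂*b₂) * X 0^2 * X 2 + C (-2*a₅*b₀) * X 0^2 * X 1 + C (-2*a₂*b₁) * X 0^2 * X 1 + C (3*a₁*b₂) * X 0^2 * X 1 + C (-2*a₂*b₀) * X 0^3 + C (3*a₀*b₂) * X 0^3, ?_⟩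
      rw [h2f, h2g, hF, hG]
      simp only [C_mul, map_neg, map_one, map_ofNat, C_1]
      ring
    · show (X 0 : MvPolynomial (Fin 4) ℂ) ∣ 3 * F * pderiv (3 : Fin 4) G - 2 * G * pderiv (3 : Fin 4) F
      refine ⟨C (-2*a₃*b₃) * X 0 * X 1^2 + C (-2*a₃*b₂) * X 0^2 * X 2 + C (-2*a₃*b₁) * X 0^2 * X 1 + C (-2*a₃*b₀) * X 0^3, ?_⟩
      rw [h3f, h3g, hF, hG]
      simp only [C_mul, map_neg, map_one, map_ofNat, C_1]
      ring
  · intro hd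
    obtain ⟨q1, hq1⟩ := hd
    obtain ⟨q2, hq2⟩ := key
    have hcorr : (C (3 * a₆ * b₁ - 2 * a₄ * b₃) * X 1 ^ 4 +
        C (3 * a₆ * b₂ - 2 * a₅ * b₃) * X 1 ^ 3 * X 2 : MvPolynomial (Fin 4) ℂ) =
        X 0 * (q1 - q2) := by
      linear_combination hq1 - hq2
    have e1 := congrArg (eval ![0, 1, 0, 0]) hcorr
    have e2 := congrArg (eval ![0, 1, 1, 0]) hcorr
    simp [eval_C, eval_X] at e1 e2
    constructor
    · linear_combination e1
    · linear_combination e2 - e1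
  · rintro ⟨e1, e2⟩
    have h1 : 3 * a₆ * b₁ - 2 * a₄ * b₃ = 0 := by linear_combination e1
    have h2 : 3 * a₆ * b₂ - 2 * a₅ * b₃ = 0 := by linear_combination e2
    simpa [h1, h2] using key
end

section
/- In the polynomial ring ℚ[a₀,a₁,a₂,a₃,b₀,b₁,b₂] in seven variables, the radical of the ideal J = ⟨a₃, 3b₁b₂ − 4a₂, 6a₀ − 6b₀b₁ + a₁b₁, 3b₁² − 8a₁ + 12b₀, b₂², b₂(a₁ − 3b₀), (a₁ − 3b₀)²⟩ equals the ideal ⟨8a₀ − b₁³, a₂, b₂, a₃, 4b₀ − b₁², 4a₁ − 3b₁²⟩. -/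
/-!
The ideal `K` on the right is the kernel of the parametrization
`s ↦ (s³, 3s², 0, 0, s², 2s, 0)` of `C`, hence prime: substituting `b₁/2` for `s` inverts the
parametrization modulo `K`. Every generator of `J` vanishes on `C`, so `√J ⊆ √K = K`.
Conversely `b₂` and `a₁ - 3b₀` are nilpotent modulo `J`, and each generator of `K` is a
combination of these two and the generators of `J`.
-/

open MvPolynomial

-- Affine coordinates `a₀,a₁,a₂,a₃,b₀,b₁,b₂` on the chart `b₃ = a₆ = 1`.
noncomputable def a0 : MvPolynomial (Fin 7) ℚ := X 0
noncomputable def a1 : MvPolynomial (Fin 7) ℚ := X 1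
noncomputable def a2 : MvPolynomial (Fin 7) ℚ := X 2
noncomputable def a3 : MvPolynomial (Fin 7) ℚ := X 3
noncomputable def b0 : MvPolynomial (Fin 7) ℚ := X 4
noncomputable def b1 : MvPolynomial (Fin 7) ℚ := X 5
noncomputable def b2 : MvPolynomial (Fin 7) ℚ := X 6

theorem MvPolynomial.ker_eq_of_X_sub_mem {σ R B : Type*} [CommRing R] [CommRing B] [Algebra R B]
    (f : MvPolynomial σ R →ₐ[R] B) (g : B →ₐ[R] MvPolynomial σ R) {I : Ideal (MvPolynomial σ R)}
    (hI : I ≤ RingHom.ker f) (h : ∀ i, X i - g (f (X i)) ∈ I) : RingHom.ker f = I := by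
  have hgf : (Ideal.Quotient.mkₐ R I).comp (g.comp f) = Ideal.Quotient.mkₐ R I :=
    algHom_ext fun i => (Ideal.Quotient.eq.2 (h i)).symm
  refine le_antisymm (fun p hp => ?_) hI
  rw [← Ideal.Quotient.eq_zero_iff_mem]
  simpa [RingHom.mem_ker.1 hp] using (AlgHom.congr_fun hgf p).symm

noncomputable def indeterminacyIdeal : Ideal (MvPolynomial (Fin 7) ℚ) :=
  Ideal.span {a3, 3 * b1 * b2 - 4 * a2, 6 * a0 - 6 * b0 * b1 + a1 * b1,
    3 * b1 ^ 2 - 8 * a1 + 12 * b0, b2 ^ 2, b2 * (a1 - 3 * b0), (a1 - 3 * b0) ^ 2}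

noncomputable def curveIdeal : Ideal (MvPolynomial (Fin 7) ℚ) :=
  Ideal.span {8 * a0 - b1 ^ 3, a2, b2, a3, 4 * b0 - b1 ^ 2, 4 * a1 - 3 * b1 ^ 2}

/-- `(g, f) = (u², u³)` with `u = s x₀ + x₁`, so that `s = b₁/2`. -/
noncomputable def curveParam : MvPolynomial (Fin 7) ℚ →ₐ[ℚ] Polynomial ℚ :=
  aeval ![Polynomial.X ^ 3, 3 * Polynomial.X ^ 2, 0, 0, Polynomial.X ^ 2, 2 * Polynomial.X, 0]

noncomputable def curveSection : Polynomial ℚ →ₐ[ℚ] MvPolynomial (Fin 7) ℚ :=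
  Polynomial.aeval (C (1 / 2) * b1)

theorem curveIdeal_le_ker_curveParam : curveIdeal ≤ RingHom.ker curveParam := by
  simp only [curveIdeal, Ideal.span_le, Set.insert_subset_iff, Set.singleton_subset_iff,
    SetLike.mem_coe, RingHom.mem_ker]
  simp [curveParam, a0, a1, a2, a3, b0, b1, b2]
  and_intros <;> ring

theorem indeterminacyIdeal_le_ker_curveParam : indeterminacyIdeal ≤ RingHom.ker curveParam := by
  simp only [indeterminacyIdeal, Ideal.span_le, Set.insert_subset_iff, Set.singleton_subset_iff,
    SetLike.mem_coe, RingHom.mem_ker]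
  simp [curveParam, a0, a1, a2, a3, b0, b1, b2]
  and_intros <;> ring

theorem X_sub_curveSection_curveParam_mem (i : Fin 7) :
    X i - curveSection (curveParam (X i)) ∈ curveIdeal := by
  have gen : ∀ p ∈ ({8 * a0 - b1 ^ 3, a2, b2, a3, 4 * b0 - b1 ^ 2, 4 * a1 - 3 * b1 ^ 2} :
      Set (MvPolynomial (Fin 7) ℚ)), ∀ q : ℚ, C q * p ∈ curveIdeal :=
    fun p hp q => curveIdeal.mul_mem_left _ (Ideal.subset_span hp)
  fin_cases i
  · convert gen (8 * a0 - b1 ^ 3) (by simp) (1 / 8) using 1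
    exact MvPolynomial.funext fun x => by simp [curveSection, curveParam, a0, b1]; ring
  · convert gen (4 * a1 - 3 * b1 ^ 2) (by simp) (1 / 4) using 1
    exact MvPolynomial.funext fun x => by
      simp [curveSection, curveParam, a1, b1, map_ofNat]; ring
  · convert gen a2 (by simp) 1 using 1
    simp [curveParam, a2]
  · convert gen a3 (by simp) 1 using 1
    simp [curveParam, a3]
  · convert gen (4 * b0 - b1 ^ 2) (by simp) (1 / 4) using 1
    exact MvPolynomial.funext fun x => by simp [curveSection, curveParam, b0, b1]; ring
  · convert curveIdeal.zero_mem
    exact MvPolynomial.funext fun x => by simp [curveSection, curveParam, b1, map_ofNat]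
  · convert gen b2 (by simp) 1 using 1
    simp [curveParam, b2]

theorem ker_curveParam : RingHom.ker curveParam = curveIdeal :=
  ker_eq_of_X_sub_mem _ curveSection curveIdeal_le_ker_curveParam
    X_sub_curveSection_curveParam_mem

theorem curveIdeal_isPrime : curveIdeal.IsPrime :=
  ker_curveParam ▸ RingHom.ker_isPrime _

theorem curveIdeal_le_radical_indeterminacyIdeal :
    curveIdeal ≤ indeterminacyIdeal.radical := by
  set J := indeterminacyIdeal
  have gen : ∀ p ∈ ({a3, 3 * b1 * b2 - 4 * a2, 6 * a0 - 6 * b0 * b1 + a1 * b1,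
      3 * b1 ^ 2 - 8 * a1 + 12 * b0, b2 ^ 2, b2 * (a1 - 3 * b0), (a1 - 3 * b0) ^ 2} :
      Set (MvPolynomial (Fin 7) ℚ)), p ∈ J.radical :=
    fun p hp => J.le_radical (Ideal.subset_span hp)
  have hd : a1 - 3 * b0 ∈ J.radical := Ideal.mem_radical_of_pow_mem (m := 2) (gen _ (by simp))
  have hb2 : b2 ∈ J.radical := Ideal.mem_radical_of_pow_mem (m := 2) (gen _ (by simp))
  have hb0 : 4 * b0 - b1 ^ 2 ∈ J.radical := by
    rw [show 4 * b0 - b1 ^ 2 = C (-1 / 3) * (3 * b1 ^ 2 - 8 * a1 + 12 * b0)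
        + C (-8 / 3) * (a1 - 3 * b0) from
      MvPolynomial.funext fun x => by simp [a1, b0, b1]; ring]
    exact add_mem (Ideal.mul_mem_left _ _ (gen _ (by simp))) (Ideal.mul_mem_left _ _ hd)
  have ha1 : 4 * a1 - 3 * b1 ^ 2 ∈ J.radical := by
    rw [show 4 * a1 - 3 * b1 ^ 2 = 3 * (4 * b0 - b1 ^ 2) + 4 * (a1 - 3 * b0) by ring]
    exact add_mem (Ideal.mul_mem_left _ _ hb0) (Ideal.mul_mem_left _ _ hd)
  have ha0 : 8 * a0 - b1 ^ 3 ∈ J.radical := by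
    rw [show 8 * a0 - b1 ^ 3 = C (4 / 3) * (6 * a0 - 6 * b0 * b1 + a1 * b1)
        + 2 * b1 * (4 * b0 - b1 ^ 2) - C (1 / 3) * b1 * (4 * a1 - 3 * b1 ^ 2) from
      MvPolynomial.funext fun x => by simp [a0, a1, b0, b1]; ring]
    exact sub_mem (add_mem (Ideal.mul_mem_left _ _ (gen _ (by simp)))
      (Ideal.mul_mem_left _ _ hb0)) (Ideal.mul_mem_left _ _ ha1)
  have ha2 : a2 ∈ J.radical := by
    rw [show a2 = C (-1 / 4) * (3 * b1 * b2 - 4 * a2) + C (3 / 4) * b1 * b2 from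
      MvPolynomial.funext fun x => by simp [a2, b1, b2]; ring]
    exact add_mem (Ideal.mul_mem_left _ _ (gen _ (by simp))) (Ideal.mul_mem_left _ _ hb2)
  simp only [curveIdeal, Ideal.span_le, Set.insert_subset_iff, Set.singleton_subset_iff,
    SetLike.mem_coe]
  exact ⟨ha0, ha2, hb2, gen _ (by simp), hb0, ha1⟩

/-- The radical of the indeterminacy ideal `J` on the chart `b₃ = a₆ = 1` is
the ideal of the curve `C`. -/
theorem stmt12 :
    (Ideal.span
      ({a3, 3 * b1 * b2 - 4 * a2, 6 * a0 - 6 * b0 * b1 + a1 * b1,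
        3 * b1 ^ 2 - 8 * a1 + 12 * b0, b2 ^ 2, b2 * (a1 - 3 * b0),
        (a1 - 3 * b0) ^ 2} : Set (MvPolynomial (Fin 7) ℚ))).radical =
    Ideal.span
      ({8 * a0 - b1 ^ 3, a2, b2, a3, 4 * b0 - b1 ^ 2,
        4 * a1 - 3 * b1 ^ 2} : Set (MvPolynomial (Fin 7) ℚ)) := by
  change indeterminacyIdeal.radical = curveIdeal
  have hJK : indeterminacyIdeal ≤ curveIdeal :=
    ker_curveParam ▸ indeterminacyIdeal_le_ker_curveParam
  exact le_antisymm ((Ideal.radical_mono hJK).trans_eq curveIdeal_isPrime.radical)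
    curveIdeal_le_radical_indeterminacyIdeal
end

section
/- In the polynomial ring ℚ[a₀,a₁,a₂,a₃,b₀,b₁,b₂], the sequence of six polynomials 8a₀ − b₁³, a₂, b₂, a₃, 4b₀ − b₁², 4a₁ − 3b₁² is a regular sequence. -/
open MvPolynomial

namespace Stmt13Aux

abbrev R7 := MvPolynomial (Fin 7) ℚ

lemma sub_aeval_mem (f : Fin 7 → R7) (I : Ideal R7) (hf : ∀ v, X v - f v ∈ I) (z : R7) :
    z - aeval f z ∈ I := by
  induction z using MvPolynomial.induction_on with
  | C a => simp
  | add p q hp hq =>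
    have := I.add_mem hp hq
    rw [map_add]
    convert this using 1
    ring
  | mul_X p i hp =>
    rw [map_mul, aeval_X]
    have h1 : p * X i - aeval f p * f i
        = p * (X i - f i) + (p - aeval f p) * f i := by ring
    rw [h1]
    exact I.add_mem (I.mul_mem_left _ (hf i)) (I.mul_mem_right _ hp)

lemma mem_ofList_iff (f : Fin 7 → R7) (l : List R7)
    (hf : ∀ v, X v - f v ∈ Ideal.ofList l)
    (h0 : ∀ r ∈ l, aeval f r = 0) (z : R7) :
    z ∈ Ideal.ofList l ↔ aeval f z = 0 := by
  constructor
  · intro hz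
    have hle : Ideal.ofList l ≤ RingHom.ker (aeval f : R7 →ₐ[ℚ] R7).toRingHom := by
      rw [Ideal.span_le]
      intro r hr
      exact h0 r hr
    exact hle hz
  · intro hz
    have := sub_aeval_mem f _ hf z
    rwa [hz, sub_zero] at this

lemma smul_top (I : Ideal R7) : (I • (⊤ : Submodule R7 R7)) = I := by
  simp [Ideal.smul_top_eq_map, Algebra.algebraMap_self, Ideal.map_id, Submodule.restrictScalars_self]

lemma isSMulRegular_quot (I : Ideal R7) (r : R7)
    (h : ∀ z : R7, r * z ∈ I → z ∈ I) :
    IsSMulRegular (R7 ⧸ (I • (⊤ : Submodule R7 R7))) r := by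
  intro x y hxy
  obtain ⟨x, rfl⟩ := Submodule.Quotient.mk_surjective _ x
  obtain ⟨y, rfl⟩ := Submodule.Quotient.mk_surjective _ y
  simp only [← Submodule.Quotient.mk_smul, Submodule.Quotient.eq, smul_top, smul_eq_mul] at hxy
  rw [Submodule.Quotient.eq, smul_top]
  exact h (x - y) (by rw [mul_sub]; simpa [Ideal.mul_top] using hxy)

lemma ne_zero_of_eval {p : Fin 7 → ℚ} {z : R7} (h : eval p z ≠ 0) : z ≠ 0 := by
  intro hz; rw [hz, map_zero] at h; exact h rfl

lemma step (l : List R7) (f : Fin 7 → R7) (hf : ∀ v, X v - f v ∈ Ideal.ofList l)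
    (h0 : ∀ r ∈ l, aeval f r = 0) (r : R7) (hr : aeval f r ≠ 0) :
    IsSMulRegular (R7 ⧸ (Ideal.ofList l • (⊤ : Submodule R7 R7))) r := by
  apply isSMulRegular_quot
  intro z hz
  rw [mem_ofList_iff f l hf h0] at hz ⊢
  rw [map_mul] at hz
  rcases mul_eq_zero.mp hz with h | h
  · exact absurd h hr
  · exact h

lemma c8 : (C ((8:ℚ)⁻¹) : R7) * 8 = 1 := by
  rw [← map_ofNat (C : ℚ →+* R7) 8, ← C_mul]
  norm_num

lemma c4 : (C ((4:ℚ)⁻¹) : R7) * 4 = 1 := by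
  rw [← map_ofNat (C : ℚ →+* R7) 4, ← C_mul]
  norm_num

lemma mem0 (l : List R7) (h : 8 * X 0 - X 5 ^ 3 ∈ l) :
    (X 0 : R7) - C ((8:ℚ)⁻¹) * X 5 ^ 3 ∈ Ideal.ofList l := by
  have heq : (X 0 : R7) - C ((8:ℚ)⁻¹) * X 5 ^ 3 = C ((8:ℚ)⁻¹) * (8 * X 0 - X 5 ^ 3) := by
    linear_combination (-(X 0 : R7)) * c8
  rw [heq]
  exact Ideal.mul_mem_left _ _ (Ideal.subset_span h)

lemma mem4 (l : List R7) (h : 4 * X 4 - X 5 ^ 2 ∈ l) :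
    (X 4 : R7) - C ((4:ℚ)⁻¹) * X 5 ^ 2 ∈ Ideal.ofList l := by
  have heq : (X 4 : R7) - C ((4:ℚ)⁻¹) * X 5 ^ 2 = C ((4:ℚ)⁻¹) * (4 * X 4 - X 5 ^ 2) := by
    linear_combination (-(X 4 : R7)) * c4
  rw [heq]
  exact Ideal.mul_mem_left _ _ (Ideal.subset_span h)

lemma mem1 (l : List R7) (h : 4 * X 1 - 3 * X 5 ^ 2 ∈ l) :
    (X 1 : R7) - C ((4:ℚ)⁻¹) * (3 * X 5 ^ 2) ∈ Ideal.ofList l := by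
  have heq : (X 1 : R7) - C ((4:ℚ)⁻¹) * (3 * X 5 ^ 2)
      = C ((4:ℚ)⁻¹) * (4 * X 1 - 3 * X 5 ^ 2) := by
    linear_combination (-(X 1 : R7)) * c4
  rw [heq]
  exact Ideal.mul_mem_left _ _ (Ideal.subset_span h)

lemma memX (l : List R7) (v : Fin 7) (h : (X v : R7) ∈ l) :
    (X v : R7) - 0 ∈ Ideal.ofList l := by
  rw [sub_zero]
  exact Ideal.subset_span h

noncomputable def f1 : Fin 7 → R7 := fun v => if v = 0 then C ((8:ℚ)⁻¹) * X 5 ^ 3 else X v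
noncomputable def f2 : Fin 7 → R7 := fun v => if v = 2 then 0 else f1 v
noncomputable def f3 : Fin 7 → R7 := fun v => if v = 6 then 0 else f2 v
noncomputable def f4 : Fin 7 → R7 := fun v => if v = 3 then 0 else f3 v
noncomputable def f5 : Fin 7 → R7 := fun v => if v = 4 then C ((4:ℚ)⁻¹) * X 5 ^ 2 else f4 v
noncomputable def f6 : Fin 7 → R7 :=
  fun v => if v = 1 then C ((4:ℚ)⁻¹) * (3 * X 5 ^ 2) else f5 v

lemma step0 :
    IsSMulRegular (R7 ⧸ (Ideal.ofList ([] : List R7) • (⊤ : Submodule R7 R7)))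
      (8 * X 0 - X 5 ^ 3 : R7) := by
  apply step _ X
  · intro v; simp
  · intro r hr; simp at hr
  · apply ne_zero_of_eval (p := fun v => if v = 0 then 1 else 0)
    simp

lemma step1 :
    IsSMulRegular (R7 ⧸ (Ideal.ofList ([8 * X 0 - X 5 ^ 3] : List R7) • (⊤ : Submodule R7 R7)))
      (X 2 : R7) := by
  apply step _ f1
  · intro v; fin_cases v
    · exact mem0 _ (by simp)
    all_goals simp [f1]
  · intro r hr; simp only [List.mem_singleton] at hr; subst hr
    simp [f1, map_ofNat]
    linear_combination (X 5 : R7) ^ 3 * c8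
  · apply ne_zero_of_eval (p := fun v => if v = 2 then 1 else 0)
    simp [f1]

lemma step2 :
    IsSMulRegular (R7 ⧸ (Ideal.ofList ([8 * X 0 - X 5 ^ 3, X 2] : List R7) • (⊤ : Submodule R7 R7)))
      (X 6 : R7) := by
  apply step _ f2
  · intro v; fin_cases v
    · exact mem0 _ (by simp)
    · simp [f2, f1]
    · exact memX _ 2 (by simp)
    all_goals simp [f2, f1]
  · intro r hr; simp only [List.mem_cons, List.mem_singleton] at hr
    rcases hr with rfl | rfl | h
    · simp [f2, f1, map_ofNat]
      linear_combination (X 5 : R7) ^ 3 * c8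
    · simp [f2]
    · exact absurd h (by simp)
  · apply ne_zero_of_eval (p := fun v => if v = 6 then 1 else 0)
    simp [f2, f1]

lemma step3 :
    IsSMulRegular (R7 ⧸ (Ideal.ofList ([8 * X 0 - X 5 ^ 3, X 2, X 6] : List R7) • (⊤ : Submodule R7 R7)))
      (X 3 : R7) := by
  apply step _ f3
  · intro v; fin_cases v
    · exact mem0 _ (by simp)
    · simp [f3, f2, f1]
    · exact memX _ 2 (by simp)
    · simp [f3, f2, f1]
    · simp [f3, f2, f1]
    · simp [f3, f2, f1]
    · exact memX _ 6 (by simp)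
  · intro r hr; simp only [List.mem_cons, List.mem_singleton] at hr
    rcases hr with rfl | rfl | rfl | h
    · simp [f3, f2, f1, map_ofNat]
      linear_combination (X 5 : R7) ^ 3 * c8
    · simp [f3, f2]
    · simp [f3]
    · exact absurd h (by simp)
  · apply ne_zero_of_eval (p := fun v => if v = 3 then 1 else 0)
    simp [f3, f2, f1]

lemma step4 :
    IsSMulRegular (R7 ⧸ (Ideal.ofList ([8 * X 0 - X 5 ^ 3, X 2, X 6, X 3] : List R7)
      • (⊤ : Submodule R7 R7))) (4 * X 4 - X 5 ^ 2 : R7) := by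
  apply step _ f4
  · intro v; fin_cases v
    · exact mem0 _ (by simp)
    · simp [f4, f3, f2, f1]
    · exact memX _ 2 (by simp)
    · exact memX _ 3 (by simp)
    · simp [f4, f3, f2, f1]
    · simp [f4, f3, f2, f1]
    · exact memX _ 6 (by simp)
  · intro r hr; simp only [List.mem_cons, List.mem_singleton] at hr
    rcases hr with rfl | rfl | rfl | rfl | h
    · simp [f4, f3, f2, f1, map_ofNat]
      linear_combination (X 5 : R7) ^ 3 * c8
    · simp [f4, f3, f2]
    · simp [f4, f3]
    · simp [f4]
    · exact absurd h (by simp)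
  · apply ne_zero_of_eval (p := fun v => if v = 4 then 1 else 0)
    simp [f4, f3, f2, f1, map_ofNat]

lemma step5 :
    IsSMulRegular (R7 ⧸ (Ideal.ofList ([8 * X 0 - X 5 ^ 3, X 2, X 6, X 3, 4 * X 4 - X 5 ^ 2] : List R7)
      • (⊤ : Submodule R7 R7))) (4 * X 1 - 3 * X 5 ^ 2 : R7) := by
  apply step _ f5
  · intro v; fin_cases v
    · exact mem0 _ (by simp)
    · simp [f5, f4, f3, f2, f1]
    · exact memX _ 2 (by simp)
    · exact memX _ 3 (by simp)
    · exact mem4 _ (by simp)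
    · simp [f5, f4, f3, f2, f1]
    · exact memX _ 6 (by simp)
  · intro r hr; simp only [List.mem_cons, List.mem_singleton] at hr
    rcases hr with rfl | rfl | rfl | rfl | rfl | h
    · simp [f5, f4, f3, f2, f1, map_ofNat]
      linear_combination (X 5 : R7) ^ 3 * c8
    · simp [f5, f4, f3, f2]
    · simp [f5, f4, f3]
    · simp [f5, f4]
    · simp [f5, f4, f3, f2, f1, map_ofNat]
      linear_combination (X 5 : R7) ^ 2 * c4
    · exact absurd h (by simp)
  · apply ne_zero_of_eval (p := fun v => if v = 1 then 1 else 0)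
    simp [f5, f4, f3, f2, f1, map_ofNat]

lemma hf6 : ∀ v, (X v : R7) - f6 v ∈
    Ideal.ofList ([8 * X 0 - X 5 ^ 3, X 2, X 6, X 3, 4 * X 4 - X 5 ^ 2, 4 * X 1 - 3 * X 5 ^ 2] :
      List R7) := by
  intro v; fin_cases v
  · exact mem0 _ (by simp)
  · exact mem1 _ (by simp)
  · exact memX _ 2 (by simp)
  · exact memX _ 3 (by simp)
  · exact mem4 _ (by simp)
  · simp [f6, f5, f4, f3, f2, f1]
  · exact memX _ 6 (by simp)

lemma h06 : ∀ r ∈ ([8 * X 0 - X 5 ^ 3, X 2, X 6, X 3, 4 * X 4 - X 5 ^ 2,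
    4 * X 1 - 3 * X 5 ^ 2] : List R7), aeval f6 r = 0 := by
  intro r hr; simp only [List.mem_cons, List.mem_singleton] at hr
  rcases hr with rfl | rfl | rfl | rfl | rfl | rfl | h
  · simp [f6, f5, f4, f3, f2, f1, map_ofNat]
    linear_combination (X 5 : R7) ^ 3 * c8
  · simp [f6, f5, f4, f3, f2]
  · simp [f6, f5, f4, f3]
  · simp [f6, f5, f4]
  · simp [f6, f5, f4, f3, f2, f1, map_ofNat]
    linear_combination (X 5 : R7) ^ 2 * c4
  · simp [f6, f5, f4, f3, f2, f1, map_ofNat]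
    linear_combination (3 * (X 5 : R7) ^ 2) * c4
  · exact absurd h (by simp)

end Stmt13Aux

open Stmt13Aux

/-- The six generators of the ideal of the curve `C` form a regular sequence in
`ℚ[a₀,a₁,a₂,a₃,b₀,b₁,b₂]`, so `C` is a (local) complete intersection. -/
theorem stmt13 :
    RingTheory.Sequence.IsRegular (MvPolynomial (Fin 7) ℚ)
      [8 * a0 - b1 ^ 3, a2, b2, a3, 4 * b0 - b1 ^ 2,
        4 * a1 - 3 * b1 ^ 2] := by
  simp only [a0, a1, a2, a3, b0, b1, b2]
  refine ⟨⟨?_⟩, ?_⟩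
  · intro i hi
    simp only [List.length_cons, List.length_nil] at hi
    interval_cases i
    · exact step0
    · exact step1
    · exact step2
    · exact step3
    · exact step4
    · exact step5
  · intro h
    have h1 : (1 : R7) ∈ Ideal.ofList ([8 * X 0 - X 5 ^ 3, X 2, X 6, X 3,
        4 * X 4 - X 5 ^ 2, 4 * X 1 - 3 * X 5 ^ 2] : List R7) • (⊤ : Submodule R7 R7) :=
      h ▸ Submodule.mem_top
    rw [smul_top, mem_ofList_iff f6 _ hf6 h06, map_one] at h1
    exact one_ne_zero h1
end

section
/- Let b₀, b₁, b₃, a₀, a₁, a₂, a₃, a₅ ∈ ℂ and set g = b₀x₀² + b₁x₀x₁ + x₀x₂ + b₃x₁² and f = (a₀x₀ + a₁x₁ + a₂x₂ + a₃x₃)x₀² + a₅(b₁x₀x₁² + x₀x₁x₂ + (2/3)b₃x₁³) in ℂ[x₀,x₁,x₂,x₃]. If 3f·∂g/∂xᵢ − 2g·∂f/∂xᵢ = 0 for all i ∈ {0,1,2,3}, then a₀ = a₁ = a₂ = a₃ = a₅ = 0. Hence on the open set b₂ = 1 the map (g,f) ↦ ω = (3f·dg − 2g·df)/x₀ has no indeterminacies.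 -/
open MvPolynomial

set_option maxHeartbeats 2000000 in
/-- On the chart `b₂ = 1`, the map `(g, f) ↦ ω = (3f·dg − 2g·df)/x₀` has no
indeterminacies: if all components of `3f·dg − 2g·df` vanish, then all the
cubic coordinates `(a₀ : a₁ : a₂ : a₃ : a₅)` vanish (which is impossible in
`ℙ⁴`). -/
theorem stmt17 (b₀ b₁ b₃ a₀ a₁ a₂ a₃ a₅ : ℂ)
    (f g : MvPolynomial (Fin 4) ℂ)
    (hg : g = C b₀ * X 0 ^ 2 + C b₁ * X 0 * X 1 + X 0 * X 2 + C b₃ * X 1 ^ 2)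
    (hf : f = (C a₀ * X 0 + C a₁ * X 1 + C a₂ * X 2 + C a₃ * X 3) * X 0 ^ 2 +
      C a₅ * (C b₁ * X 0 * X 1 ^ 2 + X 0 * X 1 * X 2 +
        C (2/3 : ℂ) * C b₃ * X 1 ^ 3))
    (h : ∀ i : Fin 4, 3 * f * pderiv i g - 2 * g * pderiv i f = 0) :
    a₀ = 0 ∧ a₁ = 0 ∧ a₂ = 0 ∧ a₃ = 0 ∧ a₅ = 0 := by
  have E1 := congrArg (aeval (![1,0,0,0] : Fin 4 → ℂ)) (h 3)
  have E2 := congrArg (aeval (![1,0,1,0] : Fin 4 → ℂ)) (h 3)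
  have E3 := congrArg (aeval (![1,0,0,0] : Fin 4 → ℂ)) (h 2)
  have E4 := congrArg (aeval (![1,0,1,0] : Fin 4 → ℂ)) (h 2)
  have E5 := congrArg (aeval (![1,1,0,0] : Fin 4 → ℂ)) (h 2)
  have E6 := congrArg (aeval (![1,1,1,0] : Fin 4 → ℂ)) (h 2)
  rw [hf, hg] at E1 E2 E3 E4 E5 E6
  simp +decide [pderiv_X, Pi.single_apply, -mul_eq_zero] at E1 E2 E3 E4 E5 E6
  have ha₃ : a₃ = 0 := by linear_combination (E2 - E1) / 2
  have ha₂ : a₂ = 0 := by linear_combination E4 - E3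
  have ha₀ : a₀ = 0 := by linear_combination E3 / 3 + (2 * b₀ / 3) * ha₂
  have ha₅ : a₅ = 0 := by linear_combination E6 - E5 - ha₂
  have ha₁ : a₁ = 0 := by
    linear_combination E5 / 3 - ha₀ - (b₁ + 2 / 3 * b₃) * ha₅ +
      (2 * (b₀ + b₁ + b₃) / 3) * (ha₂ + ha₅)
  exact ⟨ha₀, ha₁, ha₂, ha₃, ha₅⟩
end

section
/- For all natural numbers N, m, v with 1 ≤ m ≤ N − 2 and v ≥ 2, the following identity holds in ℚ: ∑_{i=m+1}^{N−1} 1/(v + i − 2) = ((v + N − 3)!/(v + m − 2)!) · ∑_{i=m+2}^{N} 1/((v + i − 3)² · ∏_{j=m+2, j≠i}^{N} (j − i)). -/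
/-!
Put `n + 1 = N - m - 1` and `a = v + m - 1`. The sum on the right is the divided difference of
`x ↦ 1 / x ^ 2` at the consecutive nodes `a, …, a + n`: since
`∏_{j ≠ k} (j - k) = (-1) ^ k * k ! * (n - k)!`, it equals `(-1) ^ n * Δⁿ (1 / x ^ 2) a / n !`.
The recursion `Δⁿ⁺¹ f a = Δⁿ f (a + 1) - Δⁿ f a` gives, by induction on `n`,
`(-1) ^ n * Δⁿ (1 / x ^ 2) a = n ! * (∑ l ≤ n, 1 / (a + l)) / ∏ l ≤ n, (a + l)`
(the derivative in `a` of the classical `(-1) ^ n * Δⁿ (1 / x) a = n ! / ∏ l ≤ n, (a + l)`).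
The factorial quotient is exactly `∏ l ≤ n, (a + l)`, which cancels.
-/

open Finset fwdDiff Nat

section

variable {K : Type*} [Field K]

lemma prod_range_sub_self (k : ℕ) : ∏ j ∈ range k, ((j : K) - k) = (-1) ^ k * k ! := by
  have hneg := prod_neg (s := range k) fun j => ((j + 1 : ℕ) : K)
  rw [card_range] at hneg
  rw [← prod_range_reflect, ← prod_range_add_one_eq_factorial, cast_prod, ← hneg]
  refine prod_congr rfl fun j hj => ?_
  rw [mem_range] at hj
  rw [Nat.sub_sub, Nat.cast_sub (by omega : 1 + j ≤ k)]
  push_cast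
  ring

lemma prod_range_erase_sub (n k : ℕ) (hk : k ≤ n) :
    ∏ j ∈ (range (n + 1)).erase k, ((j : K) - k) = (-1) ^ k * k ! * (n - k)! := by
  have hsplit : (range (n + 1)).erase k = range k ∪ Ico (k + 1) (n + 1) := by
    ext j; simp only [mem_erase, mem_range, mem_union, mem_Ico]; omega
  rw [hsplit, prod_union (disjoint_left.2 fun j hj hj' => by simp at hj hj'; omega),
    prod_range_sub_self, prod_Ico_eq_prod_range, show n + 1 - (k + 1) = n - k by omega,
    ← prod_range_add_one_eq_factorial (n - k), cast_prod]
  congr 1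
  exact prod_congr rfl fun j _ => by push_cast; ring

lemma fwdDiff_iter_one_eq_sum (f : K → K) (n : ℕ) (a : K) :
    (Δ_[1])^[n] f a = ∑ k ∈ range (n + 1), (-1) ^ (n - k) * n.choose k * f (a + k) := by
  rw [fwdDiff_iter_eq_sum_shift]
  simp

lemma Icc_add_eq_map_range (c n : ℕ) :
    Icc c (c + n) = (range (n + 1)).map (addLeftEmbedding c) := by
  rw [range_succ_eq_Icc_zero, map_add_left_Icc, add_zero]

lemma sum_Icc_div_prod_erase_sub [CharZero K] (g : K → K) (c n : ℕ) :
    ∑ i ∈ Icc c (c + n), g i / ∏ j ∈ (Icc c (c + n)).erase i, ((j : K) - i) =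
      (-1) ^ n * (Δ_[1])^[n] g c / n ! := by
  rw [Icc_add_eq_map_range, sum_map, fwdDiff_iter_one_eq_sum, mul_sum, sum_div]
  refine sum_congr rfl fun k hk => ?_
  have hkn : k ≤ n := Nat.lt_succ_iff.1 (mem_range.1 hk)
  rw [← map_erase, prod_map]
  simp only [addLeftEmbedding_apply, Nat.cast_add, add_sub_add_left_eq_sub]
  have hsign : (-1 : K) ^ k * ((-1) ^ n * (-1) ^ (n - k)) = 1 := by
    rw [← pow_add, ← pow_add, show k + (n + (n - k)) = 2 * n by omega, pow_mul]
    norm_num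
  have hfact : (n.choose k : K) * k ! * (n - k)! = n ! := by
    exact_mod_cast choose_mul_factorial_mul_factorial hkn
  have hchoose : (n.choose k : K) ≠ 0 := by exact_mod_cast (choose_pos hkn).ne'
  rw [prod_range_erase_sub n k hkn, ← hfact]
  field_simp
  linear_combination -(g (c + k) / (k ! * (n - k)!)) * hsign

lemma cast_factorial_add_div_factorial [CharZero K] (c n : ℕ) :
    ((c + n)! : K) / c ! = ∏ l ∈ range n, ((c : K) + 1 + l) := by
  rw [← factorial_mul_ascFactorial, ascFactorial_eq_prod_range, cast_mul,
    mul_div_cancel_left₀ _ (cast_ne_zero.2 (factorial_ne_zero c)), cast_prod]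
  push_cast
  rfl

lemma neg_one_pow_mul_fwdDiff_iter_one_div_sq (n : ℕ) (a : K) (ha : ∀ l ≤ n, a + l ≠ 0) :
    (-1) ^ n * (Δ_[1])^[n] (fun x : K => 1 / x ^ 2) a =
      n ! * (∑ l ∈ range (n + 1), 1 / (a + l)) / ∏ l ∈ range (n + 1), (a + l) := by
  induction n generalizing a with
  | zero => simp [sq, div_eq_mul_inv]
  | succ n ih =>
    have ha₀ : a ≠ 0 := by simpa using ha 0 (zero_le _)
    have ha₁ : a + (n + 1 : ℕ) ≠ 0 := ha (n + 1) le_rfl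
    have hshift : ∀ l : ℕ, a + 1 + l = a + (l + 1 : ℕ) := fun l => by push_cast; ring
    have ih₀ := ih a fun l hl => ha l (by omega)
    have ih₁ := ih (a + 1) fun l hl => hshift l ▸ ha (l + 1) (by omega)
    have hP₀ := prod_range_succ (fun l : ℕ => a + l) (n + 1)
    have hP₁ := prod_range_succ' (fun l : ℕ => a + l) (n + 1)
    have hH₀ := sum_range_succ (fun l : ℕ => 1 / (a + l)) (n + 1)
    have hH₁ := sum_range_succ' (fun l : ℕ => 1 / (a + l)) (n + 1)
    simp only [← hshift, Nat.cast_zero, add_zero] at hP₁ hH₁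
    rw [Function.iterate_succ_apply', fwdDiff, pow_succ, mul_neg_one, neg_mul, ← mul_neg, neg_sub,
      mul_sub, ih₀, ih₁]
    have hP : ∏ l ∈ range (n + 2), (a + l) ≠ 0 :=
      prod_ne_zero_iff.2 fun l hl => ha l (by simpa [Nat.lt_succ_iff] using hl)
    generalize ∏ l ∈ range (n + 2), (a + l) = P at hP hP₀ hP₁ ⊢
    generalize ∑ l ∈ range (n + 2), 1 / (a + l) = H at hH₀ hH₁ ⊢
    rw [eq_sub_of_add_eq hH₀.symm, eq_sub_of_add_eq hH₁.symm, eq_div_of_mul_eq ha₁ hP₀.symm,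
      eq_div_of_mul_eq ha₀ hP₁.symm, factorial_succ]
    push_cast at ha₁ ⊢
    field_simp
    ring

end

/-- The rational identity matching the Bott-formula contributions of a fixed
line before and after blowing up `ℙᴺ` along an `m`-dimensional center, for
every torus weight parameter `v ≥ 2`:
`∑_{i=m+1}^{N−1} 1/(v+i−2)
  = ((v+N−3)!/(v+m−2)!) · ∑_{i=m+2}^{N} 1/((v+i−3)² ∏_{j=m+2,j≠i}^{N} (j−i))`. -/
theorem stmt19 (N m v : ℕ) (hm : 1 ≤ m) (hmN : m ≤ N - 2) (hv : 2 ≤ v) :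
    ∑ i ∈ Icc (m + 1) (N - 1), (1 : ℚ) / ((v : ℚ) + (i : ℚ) - 2) =
      ((Nat.factorial (v + N - 3) : ℚ) / (Nat.factorial (v + m - 2) : ℚ)) *
        ∑ i ∈ Icc (m + 2) N,
          (1 : ℚ) / (((v : ℚ) + (i : ℚ) - 3) ^ 2 *
            ∏ j ∈ (Icc (m + 2) N).erase i, ((j : ℚ) - (i : ℚ))) := by
  obtain ⟨n, rfl⟩ : ∃ n, N = m + 2 + n := ⟨N - m - 2, by omega⟩
  set a : ℚ := v + m - 1 with ha_def
  have ha : ∀ l ≤ n, a + l ≠ 0 := fun l _ => by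
    have hv' : (2 : ℚ) ≤ v := by exact_mod_cast hv
    have hl : (0 : ℚ) ≤ l := l.cast_nonneg
    linarith
  have hLHS : ∑ i ∈ Icc (m + 1) (m + 2 + n - 1), (1 : ℚ) / (v + i - 2) =
      ∑ l ∈ range (n + 1), 1 / (a + l) := by
    rw [show m + 2 + n - 1 = m + 1 + n by omega, Icc_add_eq_map_range, sum_map]
    refine sum_congr rfl fun l _ => ?_
    simp only [addLeftEmbedding_apply, ha_def]
    push_cast
    ring_nf
  have hfact : ((v + (m + 2 + n) - 3)! : ℚ) / (v + m - 2)! = ∏ l ∈ range (n + 1), (a + l) := by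
    rw [show v + (m + 2 + n) - 3 = v + m - 2 + (n + 1) by omega, cast_factorial_add_div_factorial]
    push_cast [Nat.cast_sub (show 2 ≤ v + m by omega), ha_def]
    ring_nf
  have hRHS := sum_Icc_div_prod_erase_sub (fun r : ℚ => 1 / (r + (v - 3)) ^ 2) (m + 2) n
  rw [fwdDiff_iter_comp_add 1 (fun x : ℚ => 1 / x ^ 2) (v - 3 : ℚ),
    show ((m + 2 : ℕ) : ℚ) + (v - 3) = a by push_cast; ring,
    neg_one_pow_mul_fwdDiff_iter_one_div_sq n a ha] at hRHS
  simp only [div_div, show ∀ r : ℚ, r + (v - 3) = v + r - 3 from fun r => by ring] at hRHS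
  have hP : ∏ l ∈ range (n + 1), (a + l) ≠ 0 :=
    prod_ne_zero_iff.2 fun l hl => ha l (by simpa [Nat.lt_succ_iff] using hl)
  rw [hLHS, hfact, hRHS]
  field_simp
end
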